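/- arXiv:2305.11478 — 4 statements merged into one kernel-verified Lean document; each statement's English description precedes it below -/
import Mathlib

section
/- Let d ≥ 1 and let A be a finite subset of Δ^d with N := |A| ≥ 1 such that every coordinate of every element of A belongs to a finite set S ⊆ ℕ with |S| = m. Fix an injection π : A → ℕ. Then for every λ > 0 the Lebesgue measure of the set {u ∈ [0,1] : sup_{t ∈ [0,1]} |Σ_{ȷ∈A} r_{π(ȷ)}(u)·𝐫_ȷ(t)| > λ} is at most 2^{m+1}·e^{−λ²/(2N)}. (Claim established in the proof of Theorem 1 via Bernstein's inequality and a union bound over the at most 2^m sign patterns of (𝐫_ȷ(t))_{ȷ∈A}.) -/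
open MeasureTheory

/-- Rademacher function `r_j(t) = (-1)^⌊2^j t⌋`. -/
noncomputable def rademacher (j : ℕ) (t : ℝ) : ℝ := (-1 : ℝ) ^ ⌊(2 : ℝ) ^ j * t⌋

/-- Rademacher chaos `𝐫_ȷ = ∏ i, r_{ȷ i}`. -/
noncomputable def chaos {d : ℕ} (j : Fin d → ℕ) (t : ℝ) : ℝ := ∏ i, rademacher (j i) t

/-- The lower triangular index set `Δ^d = {ȷ : j₁ > j₂ > ... > j_d ≥ 1}`. -/
def Delta (d : ℕ) : Set (Fin d → ℕ) := {j | StrictAnti j ∧ ∀ i, 1 ≤ j i}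

/-- The `L_p[0,1]` norm, `1 ≤ p < ∞`. -/
noncomputable def LpNorm (p : ℝ) (f : ℝ → ℝ) : ℝ :=
  (∫ t in Set.Icc (0 : ℝ) 1, |f t| ^ p) ^ (1 / p)

/-- The `L_∞[0,1]` norm (essential supremum on `[0,1]`). -/
noncomputable def LinftyNorm (f : ℝ → ℝ) : ℝ :=
  (eLpNorm f ⊤ (volume.restrict (Set.Icc (0 : ℝ) 1))).toReal

/-!
On a dyadic interval `[i / 2^M, (i + 1) / 2^M)` with `M ≥ π ȷ` for all `ȷ ∈ A`, the Rademacher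
function `r_{π ȷ}` is the sign of the binary digit `M - π ȷ` of `i`, and these digits are distinct.
So the measure in question is `2^{-M}` times the number of bad `i < 2^M`. For each `t` the vector
`(𝐫_ȷ(t))_ȷ` only depends on which `r_k(t)`, `k ∈ S`, equal `-1`, so at most `2^m` vectors occur,
and for each of them the Chernoff bound with `cosh x ≤ exp (x^2 / 2)`, averaged over the
independent digits of `i`, counts at most `2^M · 2 exp (-λ^2 / 2N)` bad `i`.
-/

open Finset

noncomputable def digitSign (i k : ℕ) : ℝ := (-1) ^ (i / 2 ^ k)

lemma digitSign_eq_ite (i k : ℕ) : digitSign i k = if i.testBit k then -1 else 1 := by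
  rw [digitSign, neg_one_pow_eq_pow_mod_two, ← Nat.toNat_testBit]
  cases i.testBit k <;> simp

lemma digitSign_eq_one_or_neg_one (i k : ℕ) : digitSign i k = 1 ∨ digitSign i k = -1 := by
  rw [digitSign_eq_ite]; split_ifs <;> simp

lemma digitSign_xor (i n k : ℕ) : digitSign (i ^^^ n) k = digitSign i k * digitSign n k := by
  simp only [digitSign_eq_ite, Nat.testBit_xor]
  cases i.testBit k <;> cases n.testBit k <;> simp

lemma digitSign_xor_two_pow (i k l : ℕ) :
    digitSign (i ^^^ 2 ^ k) l = if k = l then -digitSign i l else digitSign i l := by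
  rw [digitSign_xor, digitSign_eq_ite (2 ^ k), Nat.testBit_two_pow]
  split_ifs <;> simp_all

lemma digitSign_xor_two_pow_sub_one {K l : ℕ} (i : ℕ) (hl : l < K) :
    digitSign (i ^^^ (2 ^ K - 1)) l = -digitSign i l := by
  rw [digitSign_xor, digitSign_eq_ite (2 ^ K - 1), Nat.testBit_two_pow_sub_one]
  simp [hl]

lemma sum_range_two_pow_xor {K k : ℕ} (hk : k < K) (f : ℕ → ℝ) :
    ∑ i ∈ range (2 ^ K), f (i ^^^ 2 ^ k) = ∑ i ∈ range (2 ^ K), f i := by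
  have hmem : ∀ i ∈ range (2 ^ K), i ^^^ 2 ^ k ∈ range (2 ^ K) := fun i hi =>
    mem_range.2 (Nat.xor_lt_two_pow (mem_range.1 hi) (Nat.pow_lt_pow_right (by norm_num) hk))
  exact sum_nbij' _ _ hmem hmem (fun i _ => xor_cancel_right i _) (fun i _ => xor_cancel_right i _)
    fun i _ => rfl

lemma sum_range_two_pow_mul_digitSign {K k : ℕ} (hk : k < K) (F : ℝ → ℝ) {G : ℕ → ℝ}
    (hG : ∀ i, G (i ^^^ 2 ^ k) = G i) :
    ∑ i ∈ range (2 ^ K), F (digitSign i k) * G i =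
      (F 1 + F (-1)) / 2 * ∑ i ∈ range (2 ^ K), G i := by
  have hflip : ∑ i ∈ range (2 ^ K), F (digitSign i k) * G i =
      ∑ i ∈ range (2 ^ K), F (-digitSign i k) * G i := by
    rw [← sum_range_two_pow_xor hk]
    simp only [digitSign_xor_two_pow, if_pos, hG]
  have hpair : ∀ i, F (digitSign i k) + F (-digitSign i k) = F 1 + F (-1) := fun i => by
    rcases digitSign_eq_one_or_neg_one i k with h | h <;> simp [h, add_comm]
  have hsum : 2 * ∑ i ∈ range (2 ^ K), F (digitSign i k) * G i =
      (F 1 + F (-1)) * ∑ i ∈ range (2 ^ K), G i := by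
    rw [two_mul]
    nth_rw 2 [hflip]
    rw [← sum_add_distrib, mul_sum]
    exact sum_congr rfl fun i _ => by rw [← add_mul, hpair]
  linarith

lemma sum_range_two_pow_prod_digitSign {ι : Type*} {K : ℕ} {A : Finset ι}
    {q : ι → ℕ} (hq : Set.InjOn q A) (hqK : ∀ j ∈ A, q j < K) (f : ι → ℝ → ℝ) :
    ∑ i ∈ range (2 ^ K), ∏ j ∈ A, f j (digitSign i (q j)) =
      2 ^ K * ∏ j ∈ A, (f j 1 + f j (-1)) / 2 := by
  classical
  induction A using Finset.induction_on with
  | empty => simp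
  | insert a A ha ih =>
    rw [coe_insert] at hq
    have hqa : ∀ j ∈ A, q a ≠ q j := fun j hj h =>
      ha (hq (Set.mem_insert a _) (Set.mem_insert_of_mem a hj) h ▸ hj)
    simp only [prod_insert ha]
    rw [sum_range_two_pow_mul_digitSign (hqK a (mem_insert_self a A)),
      ih (hq.mono (Set.subset_insert a _)) fun j hj => hqK j (mem_insert_of_mem hj)]
    · ring
    · intro i
      exact prod_congr rfl fun j hj => by rw [digitSign_xor_two_pow, if_neg (hqa j hj)]

lemma card_filter_lt_sum_digitSign_mul_le {ι : Type*} {K : ℕ} {A : Finset ι}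
    {q : ι → ℕ} (hq : Set.InjOn q A) (hqK : ∀ j ∈ A, q j < K) (c : ι → ℝ) {lam : ℝ}
    (hlam : 0 < lam) :
    (#{i ∈ range (2 ^ K) | lam < ∑ j ∈ A, digitSign i (q j) * c j} : ℝ) ≤
      2 ^ K * Real.exp (-lam ^ 2 / (2 * ∑ j ∈ A, c j ^ 2)) := by
  set v := ∑ j ∈ A, c j ^ 2
  have hv0 : 0 ≤ v := sum_nonneg fun j _ => sq_nonneg (c j)
  rcases hv0.eq_or_lt with hv | hv
  · rw [← hv, mul_zero, div_zero, Real.exp_zero, mul_one]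
    exact_mod_cast (card_filter_le _ _).trans (card_range _).le
  set s := lam / v
  have hs : 0 ≤ s := by positivity
  calc (#{i ∈ range (2 ^ K) | lam < ∑ j ∈ A, digitSign i (q j) * c j} : ℝ)
      ≤ ∑ i ∈ range (2 ^ K), Real.exp (s * (∑ j ∈ A, digitSign i (q j) * c j - lam)) := by
        rw [natCast_card_filter]
        refine sum_le_sum fun i _ => ?_
        split_ifs with h
        · exact Real.one_le_exp (mul_nonneg hs (by linarith))
        · exact (Real.exp_pos _).le
    _ = Real.exp (-(s * lam)) *
          ∑ i ∈ range (2 ^ K), ∏ j ∈ A, Real.exp (s * (digitSign i (q j) * c j)) := by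
        rw [mul_sum]
        refine sum_congr rfl fun i _ => ?_
        rw [← Real.exp_sum, ← Real.exp_add, mul_sub, mul_sum]
        ring_nf
    _ = Real.exp (-(s * lam)) * (2 ^ K * ∏ j ∈ A, Real.cosh (s * c j)) := by
        rw [sum_range_two_pow_prod_digitSign hq hqK fun j x => Real.exp (s * (x * c j))]
        simp only [Real.cosh_eq, one_mul, neg_one_mul, mul_neg]
    _ ≤ Real.exp (-(s * lam)) * (2 ^ K * ∏ j ∈ A, Real.exp ((s * c j) ^ 2 / 2)) := by
        gcongr with j
        exact Real.cosh_le_exp_half_sq _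
    _ = 2 ^ K * Real.exp (-lam ^ 2 / (2 * v)) := by
        rw [mul_left_comm, ← Real.exp_sum, ← Real.exp_add]
        congr 2
        simp only [mul_pow, ← sum_div, ← mul_sum]
        simp only [s]
        field_simp
        ring

lemma card_filter_lt_abs_sum_digitSign_mul_le_of_lt {ι : Type*} {K : ℕ}
    {A : Finset ι} {q : ι → ℕ} (hq : Set.InjOn q A) (hqK : ∀ j ∈ A, q j < K) (c : ι → ℝ)
    {lam : ℝ} (hlam : 0 < lam) :
    (#{i ∈ range (2 ^ K) | lam < |∑ j ∈ A, digitSign i (q j) * c j|} : ℝ) ≤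
      2 ^ K * (2 * Real.exp (-lam ^ 2 / (2 * ∑ j ∈ A, c j ^ 2))) := by
  have hneg : ∀ i, -∑ j ∈ A, digitSign i (q j) * c j = ∑ j ∈ A, digitSign i (q j) * -c j :=
    fun i => by simp only [mul_neg, sum_neg_distrib]
  have hsub : {i ∈ range (2 ^ K) | lam < |∑ j ∈ A, digitSign i (q j) * c j|} ⊆
      {i ∈ range (2 ^ K) | lam < ∑ j ∈ A, digitSign i (q j) * c j} ∪
        {i ∈ range (2 ^ K) | lam < ∑ j ∈ A, digitSign i (q j) * -c j} := by
    intro i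
    simp only [mem_union, mem_filter, lt_abs, ← hneg]
    tauto
  have hpos := card_filter_lt_sum_digitSign_mul_le hq hqK c hlam
  have hnegc := card_filter_lt_sum_digitSign_mul_le hq hqK (fun j => -c j) hlam
  simp only [neg_sq] at hnegc
  have hcard : (#{i ∈ range (2 ^ K) | lam < |∑ j ∈ A, digitSign i (q j) * c j|} : ℝ) ≤
      #{i ∈ range (2 ^ K) | lam < ∑ j ∈ A, digitSign i (q j) * c j} +
        #{i ∈ range (2 ^ K) | lam < ∑ j ∈ A, digitSign i (q j) * -c j} := by
    exact_mod_cast (card_le_card hsub).trans (card_union_le _ _)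
  linarith

-- Flipping all `K + 1` binary digits maps `[0, 2^K)` injectively into `[2^K, 2^(K+1))`.
lemma two_mul_card_filter_range_two_pow_le {K : ℕ} (P : ℕ → Prop) [DecidablePred P]
    (hP : ∀ i < 2 ^ K, P i → P (i ^^^ (2 ^ (K + 1) - 1))) :
    2 * #{i ∈ range (2 ^ K) | P i} ≤ #{i ∈ range (2 ^ (K + 1)) | P i} := by
  set s := {i ∈ range (2 ^ K) | P i}
  have hlt : ∀ i < 2 ^ K, i < 2 ^ (K + 1) := fun i hi =>
    hi.trans (Nat.pow_lt_pow_right (by norm_num) (by omega))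
  have hge : ∀ i < 2 ^ K, 2 ^ K ≤ i ^^^ (2 ^ (K + 1) - 1) := fun i hi => by
    apply Nat.ge_two_pow_of_testBit
    simp [Nat.testBit_xor, Nat.testBit_lt_two_pow hi, Nat.testBit_two_pow_sub_one]
  have hdisj : Disjoint s (s.image (· ^^^ (2 ^ (K + 1) - 1))) := by
    simp only [disjoint_left, mem_image, mem_filter, mem_range, s]
    rintro _ ⟨hi, -⟩ ⟨i, ⟨hi', -⟩, rfl⟩
    exact absurd (hge i hi') (not_le.2 hi)
  have hsub : s ∪ s.image (· ^^^ (2 ^ (K + 1) - 1)) ⊆ {i ∈ range (2 ^ (K + 1)) | P i} := by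
    refine union_subset (fun i => ?_) (fun _ => ?_) <;>
      simp only [mem_image, mem_filter, mem_range, s]
    · exact fun ⟨hi, hPi⟩ => ⟨hlt i hi, hPi⟩
    · rintro ⟨i, ⟨hi, hPi⟩, rfl⟩
      exact ⟨Nat.xor_lt_two_pow (hlt i hi) (by omega), hP i hi hPi⟩
  have := card_le_card hsub
  rwa [card_union_of_disjoint hdisj,
    card_image_of_injective _ fun a b h => by
      rw [← xor_cancel_right a (2 ^ (K + 1) - 1), h, xor_cancel_right], ← two_mul] at this

/- Digit `K` of `i < 2^K` is constant (this is `r_0 ≡ 1` on `[0, 1)`); flipping all digits at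
level `K + 1` turns it into a fair digit at the cost of a factor `2` in the range. -/
lemma card_filter_lt_abs_sum_digitSign_mul_le {ι : Type*} {K : ℕ}
    {A : Finset ι} {q : ι → ℕ} (hq : Set.InjOn q A) (hqK : ∀ j ∈ A, q j ≤ K) (c : ι → ℝ)
    {lam : ℝ} (hlam : 0 < lam) :
    (#{i ∈ range (2 ^ K) | lam < |∑ j ∈ A, digitSign i (q j) * c j|} : ℝ) ≤
      2 ^ K * (2 * Real.exp (-lam ^ 2 / (2 * ∑ j ∈ A, c j ^ 2))) := by
  have hflip : ∀ i, ∑ j ∈ A, digitSign (i ^^^ (2 ^ (K + 1) - 1)) (q j) * c j =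
      -∑ j ∈ A, digitSign i (q j) * c j := fun i => by
    rw [← sum_neg_distrib]
    refine sum_congr rfl fun j hj => ?_
    rw [digitSign_xor_two_pow_sub_one i (Nat.lt_succ_of_le (hqK j hj)), neg_mul]
  have hdouble := two_mul_card_filter_range_two_pow_le
    (K := K) (fun i => lam < |∑ j ∈ A, digitSign i (q j) * c j|)
    fun i _ hi => by rwa [hflip, abs_neg]
  have hupper := card_filter_lt_abs_sum_digitSign_mul_le_of_lt hq
    (fun j hj => Nat.lt_succ_of_le (hqK j hj)) c hlam
  have hdouble' : 2 * (#{i ∈ range (2 ^ K) | lam < |∑ j ∈ A, digitSign i (q j) * c j|} : ℝ) ≤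
      #{i ∈ range (2 ^ (K + 1)) | lam < |∑ j ∈ A, digitSign i (q j) * c j|} := by
    exact_mod_cast hdouble
  rw [show (2 : ℝ) ^ (K + 1) = 2 ^ K * 2 from pow_succ 2 K] at hupper
  linarith

lemma volume_setOf_floor_mul_mem_le {a : ℝ} (ha : 0 < a) (B : Finset ℕ) :
    volume {u : ℝ | 0 ≤ u ∧ ⌊a * u⌋₊ ∈ B} ≤ ENNReal.ofReal (#B / a) := by
  calc volume {u : ℝ | 0 ≤ u ∧ ⌊a * u⌋₊ ∈ B}
      ≤ volume (⋃ i ∈ B, Set.Ico ((i : ℝ) / a) ((i + 1) / a)) := by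
        refine measure_mono fun u ⟨hu, hB⟩ => Set.mem_iUnion₂.2 ⟨_, hB, ?_, ?_⟩
        · rw [div_le_iff₀' ha]; exact Nat.floor_le (by positivity)
        · rw [lt_div_iff₀' ha]; exact Nat.lt_floor_add_one _
    _ ≤ ∑ i ∈ B, volume (Set.Ico ((i : ℝ) / a) ((i + 1) / a)) := measure_biUnion_finset_le _ _
    _ = ENNReal.ofReal (#B / a) := by
        simp only [Real.volume_Ico, ← sub_div, add_sub_cancel_left, sum_const, nsmul_eq_mul]
        rw [← ENNReal.ofReal_natCast, ← ENNReal.ofReal_mul (Nat.cast_nonneg _), mul_one_div]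

lemma volume_setOf_floor_two_pow_mul_le (M : ℕ) (P : ℕ → Prop) [DecidablePred P] :
    volume {u ∈ Set.Ico (0 : ℝ) 1 | P ⌊2 ^ M * u⌋₊} ≤
      ENNReal.ofReal (#{i ∈ range (2 ^ M) | P i} / 2 ^ M) := by
  have h2M : (0 : ℝ) < 2 ^ M := by positivity
  have hsub : {u ∈ Set.Ico (0 : ℝ) 1 | P ⌊2 ^ M * u⌋₊} ⊆
      {u | 0 ≤ u ∧ ⌊2 ^ M * u⌋₊ ∈ ({i ∈ range (2 ^ M) | P i} : Finset ℕ)} :=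
    fun u ⟨⟨hu0, hu1⟩, hP⟩ => ⟨hu0, mem_filter.2 ⟨mem_range.2 <|
      by exact_mod_cast (Nat.floor_lt (by positivity)).2 (by push_cast; nlinarith), hP⟩⟩
  exact (measure_mono hsub).trans (volume_setOf_floor_mul_mem_le h2M _)

lemma rademacher_eq_digitSign {k M : ℕ} (hk : k ≤ M) {u : ℝ} (hu : 0 ≤ u) :
    rademacher k u = digitSign ⌊2 ^ M * u⌋₊ (M - k) := by
  have hscale : (2 : ℝ) ^ k * u = 2 ^ M * u / ((2 ^ (M - k) : ℕ) : ℝ) := by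
    rw [Nat.cast_pow, Nat.cast_ofNat, mul_div_right_comm, ← pow_sub_mul_pow 2 hk,
      mul_div_cancel_left₀ _ (by positivity)]
  rw [rademacher, digitSign, ← Int.natCast_floor_eq_floor (by positivity), zpow_natCast, hscale,
    Nat.floor_div_natCast]

lemma rademacher_eq_one_or_neg_one (k : ℕ) (t : ℝ) : rademacher k t = 1 ∨ rademacher k t = -1 := by
  rcases Int.even_or_odd ⌊(2 : ℝ) ^ k * t⌋ with h | h
  · exact Or.inl h.neg_one_zpow
  · exact Or.inr h.neg_one_zpow

def signPattern {d : ℕ} (T : Finset ℕ) (j : Fin d → ℕ) : ℝ := ∏ i, if j i ∈ T then -1 else 1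

lemma signPattern_sq {d : ℕ} (T : Finset ℕ) (j : Fin d → ℕ) : signPattern T j ^ 2 = 1 := by
  rw [signPattern, ← prod_pow]
  exact prod_eq_one fun i _ => by split_ifs <;> norm_num

lemma chaos_eq_signPattern {d : ℕ} {S : Finset ℕ} {j : Fin d → ℕ} (hj : ∀ i, j i ∈ S) (t : ℝ) :
    chaos j t = signPattern {k ∈ S | rademacher k t = -1} j := by
  refine prod_congr rfl fun i _ => ?_
  rcases rademacher_eq_one_or_neg_one (j i) t with h | h <;> simp [h, hj i]

open Classical in
lemma card_filter_exists_lt_abs_sum_digitSign_mul_chaos_le {d K : ℕ} {A : Finset (Fin d → ℕ)}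
    {S : Finset ℕ} (hcoord : ∀ j ∈ A, ∀ i, j i ∈ S) {q : (Fin d → ℕ) → ℕ}
    (hq : Set.InjOn q A) (hqK : ∀ j ∈ A, q j ≤ K) {lam : ℝ} (hlam : 0 < lam) :
    (#{i ∈ range (2 ^ K) | ∃ t, lam < |∑ j ∈ A, digitSign i (q j) * chaos j t|} : ℝ) ≤
      2 ^ #S * (2 ^ K * (2 * Real.exp (-lam ^ 2 / (2 * #A)))) := by
  have hcover : {i ∈ range (2 ^ K) | ∃ t, lam < |∑ j ∈ A, digitSign i (q j) * chaos j t|} ⊆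
      S.powerset.biUnion fun T =>
        {i ∈ range (2 ^ K) | lam < |∑ j ∈ A, digitSign i (q j) * signPattern T j|} := by
    intro i
    simp only [mem_filter, mem_biUnion, mem_powerset]
    rintro ⟨hi, t, ht⟩
    refine ⟨{k ∈ S | rademacher k t = -1}, filter_subset _ S, hi, ?_⟩
    rwa [sum_congr rfl fun j hj => by rw [chaos_eq_signPattern (hcoord j hj) t]] at ht
  have hpattern : ∀ T : Finset ℕ,
      (#{i ∈ range (2 ^ K) | lam < |∑ j ∈ A, digitSign i (q j) * signPattern T j|} : ℝ) ≤
        2 ^ K * (2 * Real.exp (-lam ^ 2 / (2 * #A))) := fun T => by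
    simpa only [signPattern_sq, sum_const, nsmul_eq_mul, mul_one]
      using card_filter_lt_abs_sum_digitSign_mul_le hq hqK (signPattern T) hlam
  calc (#{i ∈ range (2 ^ K) | ∃ t, lam < |∑ j ∈ A, digitSign i (q j) * chaos j t|} : ℝ)
      ≤ ∑ T ∈ S.powerset,
          (#{i ∈ range (2 ^ K) | lam < |∑ j ∈ A, digitSign i (q j) * signPattern T j|} : ℝ) := by
        exact_mod_cast (card_le_card hcover).trans card_biUnion_le
    _ ≤ 2 ^ #S * (2 ^ K * (2 * Real.exp (-lam ^ 2 / (2 * #A)))) := by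
        simpa only [sum_const, card_powerset, nsmul_eq_mul, Nat.cast_pow, Nat.cast_ofNat]
          using sum_le_sum fun T (_ : T ∈ S.powerset) => hpattern T

theorem stmt0_general (d : ℕ) (A : Finset (Fin d → ℕ))
    (S : Finset ℕ) (m : ℕ) (hS : S.card = m)
    (hcoord : ∀ j ∈ A, ∀ i, j i ∈ S)
    (π : (Fin d → ℕ) → ℕ) (hπ : Set.InjOn π ↑A)
    (lam : ℝ) (hlam : 0 < lam) :
    volume {u ∈ Set.Icc (0 : ℝ) 1 | ∃ t ∈ Set.Icc (0 : ℝ) 1,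
        lam < |∑ j ∈ A, rademacher (π j) u * chaos j t|} ≤
      ENNReal.ofReal (2 ^ (m + 1) * Real.exp (-(lam ^ 2) / (2 * A.card))) := by
  classical
  set M := A.sup π
  have hπM : ∀ j ∈ A, π j ≤ M := fun j hj => le_sup hj
  have hqinj : Set.InjOn (fun j => M - π j) A := fun i hi j hj h =>
    hπ hi hj (by have := hπM i hi; have := hπM j hj; simp only at h; omega)
  set P := fun i => ∃ t, lam < |∑ j ∈ A, digitSign i (M - π j) * chaos j t|
  have hcover : {u ∈ Set.Icc (0 : ℝ) 1 | ∃ t ∈ Set.Icc (0 : ℝ) 1,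
      lam < |∑ j ∈ A, rademacher (π j) u * chaos j t|} ⊆
        {u ∈ Set.Ico (0 : ℝ) 1 | P ⌊2 ^ M * u⌋₊} ∪ {1} := by
    rintro u ⟨⟨hu0, hu1⟩, t, -, ht⟩
    rcases hu1.eq_or_lt with rfl | hu1
    · exact Or.inr rfl
    refine Or.inl ⟨⟨hu0, hu1⟩, t, ?_⟩
    rwa [sum_congr rfl fun j hj => by rw [rademacher_eq_digitSign (hπM j hj) hu0]] at ht
  have hbad : (#{i ∈ range (2 ^ M) | P i} : ℝ) ≤
      2 ^ m * (2 ^ M * (2 * Real.exp (-lam ^ 2 / (2 * #A)))) :=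
    hS ▸ card_filter_exists_lt_abs_sum_digitSign_mul_chaos_le hcoord hqinj
      (fun j _ => Nat.sub_le M (π j)) hlam
  calc _ ≤ volume {u ∈ Set.Ico (0 : ℝ) 1 | P ⌊2 ^ M * u⌋₊} + volume {(1 : ℝ)} :=
        (measure_mono hcover).trans (measure_union_le _ _)
    _ ≤ ENNReal.ofReal (#{i ∈ range (2 ^ M) | P i} / 2 ^ M) := by
        rw [Real.volume_singleton, add_zero]
        exact volume_setOf_floor_two_pow_mul_le M P
    _ ≤ _ := by
        refine ENNReal.ofReal_le_ofReal ((div_le_iff₀ (by positivity)).2 (hbad.trans_eq ?_))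
        ring

/-- tail estimate for the randomized chaos, uniform in `t`, via
Bernstein's inequality and a union bound over the `2^m` sign patterns. -/
theorem stmt0 (d : ℕ) (hd : 1 ≤ d) (A : Finset (Fin d → ℕ)) (hA : ↑A ⊆ Delta d)
    (hN : 1 ≤ A.card) (S : Finset ℕ) (m : ℕ) (hS : S.card = m)
    (hcoord : ∀ j ∈ A, ∀ i, j i ∈ S)
    (π : (Fin d → ℕ) → ℕ) (hπ : Set.InjOn π ↑A)
    (lam : ℝ) (hlam : 0 < lam) :
    volume {u ∈ Set.Icc (0 : ℝ) 1 | ∃ t ∈ Set.Icc (0 : ℝ) 1,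
        lam < |∑ j ∈ A, rademacher (π j) u * chaos j t|} ≤
      ENNReal.ofReal (2 ^ (m + 1) * Real.exp (-(lam ^ 2) / (2 * A.card))) :=
  stmt0_general d A S m hS hcoord π hπ lam hlam
end

section
/- Let i < j, k < l, i₁ < j₁, k₁ < l₁ be positive integers such that {i, j, i+j} ∩ {k, l, k+l} = ∅ and {i, j, i+j, k, l, k+l} = {i₁, j₁, i₁+j₁, k₁, l₁, k₁+l₁} as sets. Then {i, j, k, l} = {i₁, j₁, k₁, l₁}, and moreover either (i+j = i₁+j₁ and k+l = k₁+l₁) or (i+j = k₁+l₁ and k+l = i₁+j₁). (Intermediate claim in the proof that A_N^♯ = ∅, obtained by comparing the maximum and the sum of the elements of the two six-element sets.) -/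
/-!
The six numbers on the left are pairwise distinct; the six on the right take the same six values,
so they are distinct too and both sides are the same multiset.
Its largest element is `max (i + j) (k + l)` and its sum is `2 * ((i + j) + (k + l))`, so the
pair of top sums `{i + j, k + l}` is determined by the set; removing it leaves `{i, j, k, l}`.
-/

theorem eq_and_eq_or_of_max_eq_of_add_eq {α : Type*} [LinearOrder α] [AddCancelCommMonoid α]
    {x y u v : α} (hmax : max x y = max u v) (hadd : x + y = u + v) :
    (x = u ∧ y = v) ∨ (x = v ∧ y = u) := by
  rcases le_total x y with hxy | hxy <;> rcases le_total u v with huv | huv <;>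
    simp only [max_eq_left, max_eq_right, hxy, huv] at hmax <;> subst hmax
  · exact .inl ⟨add_right_cancel hadd, rfl⟩
  · exact .inr ⟨add_right_cancel (hadd.trans (add_comm _ _)), rfl⟩
  · exact .inr ⟨rfl, add_left_cancel (hadd.trans (add_comm _ _))⟩
  · exact .inl ⟨rfl, add_left_cancel hadd⟩

theorem Multiset.eq_of_toFinset_eq_of_card_le {α : Type*} [DecidableEq α] {m m' : Multiset α}
    (hm : m.Nodup) (h : m.toFinset = m'.toFinset) (hcard : card m' ≤ card m) : m = m' := by
  have hm' : m'.Nodup := by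
    refine toFinset_card_eq_card_iff_nodup.mp (le_antisymm (toFinset_card_le m') ?_)
    rw [← h, toFinset_card_of_nodup hm]
    exact hcard
  exact Nodup.toFinset_inj hm hm' h

def sumTriples (a b c d : ℕ) : Multiset ℕ := {a + b, c + d} + {a, b, c, d}

theorem coe_toFinset_sumTriples (a b c d : ℕ) :
    ((sumTriples a b c d).toFinset : Set ℕ) = {a, b, a + b, c, d, c + d} := by
  ext x
  simp only [sumTriples, Multiset.toFinset_add, Multiset.insert_eq_cons, Multiset.toFinset_cons,
    Multiset.toFinset_singleton, Finset.coe_union, Finset.coe_insert, Finset.coe_singleton,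
    Set.union_insert, Set.union_singleton, Set.mem_insert_iff, Set.mem_singleton_iff]
  tauto

theorem sumTriples_sum (a b c d : ℕ) :
    (sumTriples a b c d).sum = 2 * ((a + b) + (c + d)) := by
  simp [sumTriples]; ring

theorem sumTriples_sup (a b c d : ℕ) :
    (sumTriples a b c d).sup = max (a + b) (c + d) := by
  simp [sumTriples]

theorem nodup_sumTriples {a b c d : ℕ} (ha : 0 < a) (hc : 0 < c) (hab : a < b) (hcd : c < d)
    (hdisj : ({a, b, a + b} : Set ℕ) ∩ {c, d, c + d} = ∅) : (sumTriples a b c d).Nodup := by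
  simp only [Set.ext_iff, Set.mem_inter_iff, Set.mem_insert_iff, Set.mem_singleton_iff,
    Set.mem_empty_iff_false, iff_false, not_and, not_or, forall_eq_or_imp, forall_eq] at hdisj
  simp only [sumTriples, Multiset.insert_eq_cons, Multiset.add_cons, Multiset.cons_add,
    Multiset.singleton_add, Multiset.nodup_cons, Multiset.mem_cons, Multiset.mem_singleton,
    Multiset.nodup_singleton, Nat.left_eq_add, Nat.right_eq_add, Nat.add_eq_right, not_or, and_true]
  omega

theorem sumTriples_inj {a b c d a₁ b₁ c₁ d₁ : ℕ} (hnd : (sumTriples a b c d).Nodup)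
    (h : (sumTriples a b c d).toFinset = (sumTriples a₁ b₁ c₁ d₁).toFinset) :
    ((a + b = a₁ + b₁ ∧ c + d = c₁ + d₁) ∨ (a + b = c₁ + d₁ ∧ c + d = a₁ + b₁)) ∧
      ({a, b, c, d} : Multiset ℕ) = {a₁, b₁, c₁, d₁} := by
  have hm := Multiset.eq_of_toFinset_eq_of_card_le hnd h le_rfl
  have hsums : (a + b = a₁ + b₁ ∧ c + d = c₁ + d₁) ∨ (a + b = c₁ + d₁ ∧ c + d = a₁ + b₁) := by
    refine eq_and_eq_or_of_max_eq_of_add_eq ?_ ?_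
    · rw [← sumTriples_sup, ← sumTriples_sup, hm]
    · have hsum := congrArg Multiset.sum hm
      rw [sumTriples_sum, sumTriples_sum] at hsum
      omega
  refine ⟨hsums, ?_⟩
  rcases hsums with ⟨h₁, h₂⟩ | ⟨h₁, h₂⟩
  · rw [sumTriples, sumTriples, h₁, h₂] at hm
    exact add_left_cancel hm
  · rw [sumTriples, sumTriples, h₁, h₂, Multiset.pair_comm] at hm
    exact add_left_cancel hm

theorem stmt13_general (i j k l i₁ j₁ k₁ l₁ : ℕ)
    (hi : 0 < i) (hk : 0 < k)
    (hij : i < j) (hkl : k < l)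
    (hdisj : ({i, j, i + j} : Set ℕ) ∩ {k, l, k + l} = ∅)
    (heq : ({i, j, i + j, k, l, k + l} : Set ℕ) = {i₁, j₁, i₁ + j₁, k₁, l₁, k₁ + l₁}) :
    ({i, j, k, l} : Set ℕ) = {i₁, j₁, k₁, l₁} ∧
      ((i + j = i₁ + j₁ ∧ k + l = k₁ + l₁) ∨ (i + j = k₁ + l₁ ∧ k + l = i₁ + j₁)) := by
  have hfin : (sumTriples i j k l).toFinset = (sumTriples i₁ j₁ k₁ l₁).toFinset := by
    apply Finset.coe_injective
    rw [coe_toFinset_sumTriples, coe_toFinset_sumTriples, heq]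
  obtain ⟨hsums, hrest⟩ := sumTriples_inj (nodup_sumTriples hi hk hij hkl hdisj) hfin
  refine ⟨?_, hsums⟩
  simpa using congrArg (fun m : Multiset ℕ => (m.toFinset : Set ℕ)) hrest

/-- if the six-element sets `{i,j,i+j,k,l,k+l}` and
`{i₁,j₁,i₁+j₁,k₁,l₁,k₁+l₁}` coincide and `{i,j,i+j} ∩ {k,l,k+l} = ∅`, then
`{i,j,k,l} = {i₁,j₁,k₁,l₁}` and the two top sums match up. -/
theorem stmt13 (i j k l i₁ j₁ k₁ l₁ : ℕ)
    (hi : 0 < i) (hk : 0 < k) (hi₁ : 0 < i₁) (hk₁ : 0 < k₁)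
    (hij : i < j) (hkl : k < l) (hij₁ : i₁ < j₁) (hkl₁ : k₁ < l₁)
    (hdisj : ({i, j, i + j} : Set ℕ) ∩ {k, l, k + l} = ∅)
    (heq : ({i, j, i + j, k, l, k + l} : Set ℕ) = {i₁, j₁, i₁ + j₁, k₁, l₁, k₁ + l₁}) :
    ({i, j, k, l} : Set ℕ) = {i₁, j₁, k₁, l₁} ∧
      ((i + j = i₁ + j₁ ∧ k + l = k₁ + l₁) ∨ (i + j = k₁ + l₁ ∧ k + l = i₁ + j₁)) :=
  stmt13_general i j k l i₁ j₁ k₁ l₁ hi hk hij hkl hdisj heq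
end

section
/- Let i < j, k < l, i₁ < j₁, k₁ < l₁ be positive integers such that {i, j, i+j} ∩ {k, l, k+l} = ∅ and {i, j, i+j, k, l, k+l} = {i₁, j₁, i₁+j₁, k₁, l₁, k₁+l₁} as sets. Then (i₁, j₁) = (i, j) or (i₁, j₁) = (k, l). Consequently, for A = {(i,j,i+j) : 1 ≤ i < j} and A_N = A ∩ {1,…,N}³, the set A_N^♯ of Section 4.2 is empty: there is no pair of disjointly supported triples of A_N whose union of entries can be re-split into two triples of A_N in a genuinely different way. -/
/-!
The six entries of two disjoint triples `(i, j, i + j)`, `(k, l, k + l)` are distinct, so any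
re-split of them into two triples is a permutation of the same six numbers. Comparing sums gives
`i₁ + j₁ + k₁ + l₁ = i + j + k + l`, which forces the two new sums to be the old sums `i + j` and
`k + l`; the summands of each are then the old summands, by distinctness.
-/

theorem List.Nodup.perm_of_subset_of_length_le {α : Type*} {l₁ l₂ : List α} (hl₁ : l₁.Nodup)
    (hsub : l₁ ⊆ l₂) (hlen : l₂.length ≤ l₁.length) : l₁.Perm l₂ :=
  (List.subperm_of_subset hl₁ hsub).perm_of_length_le hlen

theorem nodup_of_disjoint_sum_triples {i j k l : ℕ} (hi : 0 < i) (hk : 0 < k)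
    (hij : i < j) (hkl : k < l) (hdisj : ({i, j, i + j} : Set ℕ) ∩ {k, l, k + l} = ∅) :
    [i, j, i + j, k, l, k + l].Nodup := by
  have hne := Set.disjoint_left.mp (Set.disjoint_iff_inter_eq_empty.mpr hdisj)
  simp only [Set.mem_insert_iff, Set.mem_singleton_iff, forall_eq_or_imp, forall_eq,
    not_or] at hne
  simp only [List.nodup_cons, List.mem_cons, List.not_mem_nil, List.nodup_nil, or_false,
    not_or, not_false_eq_true, and_true]
  omega

theorem eq_or_eq_of_sum_triples_eq {i j k l i₁ j₁ k₁ l₁ : ℕ} (hi : 0 < i) (hk : 0 < k)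
    (hij : i < j) (hkl : k < l) (hij₁ : i₁ < j₁)
    (hdisj : ({i, j, i + j} : Set ℕ) ∩ {k, l, k + l} = ∅)
    (heq : ({i, j, i + j, k, l, k + l} : Set ℕ) = {i₁, j₁, i₁ + j₁, k₁, l₁, k₁ + l₁}) :
    (i₁, j₁) = (i, j) ∨ (i₁, j₁) = (k, l) := by
  have hnodup := nodup_of_disjoint_sum_triples hi hk hij hkl hdisj
  have hperm : [i, j, i + j, k, l, k + l].Perm [i₁, j₁, i₁ + j₁, k₁, l₁, k₁ + l₁] := by
    refine hnodup.perm_of_subset_of_length_le (fun x hx => ?_) le_rfl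
    have hx : x ∈ ({i, j, i + j, k, l, k + l} : Set ℕ) := by simpa using hx
    simpa [heq] using hx
  have hsum := hperm.sum_eq
  have hmem : ∀ x ∈ [i₁, j₁, i₁ + j₁, k₁, l₁, k₁ + l₁],
      x = i ∨ x = j ∨ x = i + j ∨ x = k ∨ x = l ∨ x = k + l := fun x hx => by
    simpa using hperm.mem_iff.mpr hx
  have hnodup₁ := hperm.nodup_iff.mp hnodup
  simp only [List.sum_cons, List.sum_nil] at hsum
  simp only [List.nodup_cons, List.mem_cons, List.not_mem_nil, List.nodup_nil, or_false,
    not_or, not_false_eq_true, and_true] at hnodup hnodup₁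
  have hsums : (i₁ + j₁ = i + j ∧ k₁ + l₁ = k + l) ∨ (i₁ + j₁ = k + l ∧ k₁ + l₁ = i + j) := by
    have hsum₁_mem := hmem (i₁ + j₁) (by simp)
    have hsum₂_mem := hmem (k₁ + l₁) (by simp)
    omega
  have hi₁_mem := hmem i₁ (by simp)
  have hj₁_mem := hmem j₁ (by simp)
  simp only [Prod.mk.injEq]
  omega

theorem stmt14_general (i j k l i₁ j₁ k₁ l₁ : ℕ)
    (hi : 0 < i) (hk : 0 < k)
    (hij : i < j) (hkl : k < l) (hij₁ : i₁ < j₁)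
    (hdisj : ({i, j, i + j} : Set ℕ) ∩ {k, l, k + l} = ∅)
    (heq : ({i, j, i + j, k, l, k + l} : Set ℕ) = {i₁, j₁, i₁ + j₁, k₁, l₁, k₁ + l₁}) :
    ((i₁, j₁) = (i, j) ∨ (i₁, j₁) = (k, l)) ∧
      ∀ N : ℕ, ¬ ∃ a b c e a₁ b₁ c₁ e₁ : ℕ,
        0 < a ∧ a < b ∧ 0 < c ∧ c < e ∧ 0 < a₁ ∧ a₁ < b₁ ∧ 0 < c₁ ∧ c₁ < e₁ ∧
        a + b ≤ N ∧ c + e ≤ N ∧ a₁ + b₁ ≤ N ∧ c₁ + e₁ ≤ N ∧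
        ({a, b, a + b} : Set ℕ) ∩ {c, e, c + e} = ∅ ∧
        ({a, b, a + b, c, e, c + e} : Set ℕ) = {a₁, b₁, a₁ + b₁, c₁, e₁, c₁ + e₁} ∧
        (a₁, b₁) ≠ (a, b) ∧ (a₁, b₁) ≠ (c, e) := by
  refine ⟨eq_or_eq_of_sum_triples_eq hi hk hij hkl hij₁ hdisj heq, ?_⟩
  rintro N ⟨a, b, c, e, a₁, b₁, c₁, e₁, ha, hab, hc, hce, -, hab₁, -, -, -, -, -, -,
    hdisj', heq', hne, hne'⟩
  exact (eq_or_eq_of_sum_triples_eq ha hc hab hce hab₁ hdisj' heq').elim hne hne'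

/-- under the hypotheses of Statement 13, `(i₁,j₁) = (i,j)` or
`(i₁,j₁) = (k,l)`; consequently the set `A_N^♯` of Section 4.2 is empty. -/
theorem stmt14 (i j k l i₁ j₁ k₁ l₁ : ℕ)
    (hi : 0 < i) (hk : 0 < k) (hi₁ : 0 < i₁) (hk₁ : 0 < k₁)
    (hij : i < j) (hkl : k < l) (hij₁ : i₁ < j₁) (hkl₁ : k₁ < l₁)
    (hdisj : ({i, j, i + j} : Set ℕ) ∩ {k, l, k + l} = ∅)
    (heq : ({i, j, i + j, k, l, k + l} : Set ℕ) = {i₁, j₁, i₁ + j₁, k₁, l₁, k₁ + l₁}) :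
    ((i₁, j₁) = (i, j) ∨ (i₁, j₁) = (k, l)) ∧
      ∀ N : ℕ, ¬ ∃ a b c e a₁ b₁ c₁ e₁ : ℕ,
        0 < a ∧ a < b ∧ 0 < c ∧ c < e ∧ 0 < a₁ ∧ a₁ < b₁ ∧ 0 < c₁ ∧ c₁ < e₁ ∧
        a + b ≤ N ∧ c + e ≤ N ∧ a₁ + b₁ ≤ N ∧ c₁ + e₁ ≤ N ∧
        ({a, b, a + b} : Set ℕ) ∩ {c, e, c + e} = ∅ ∧
        ({a, b, a + b, c, e, c + e} : Set ℕ) = {a₁, b₁, a₁ + b₁, c₁, e₁, c₁ + e₁} ∧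
        (a₁, b₁) ≠ (a, b) ∧ (a₁, b₁) ≠ (c, e) :=
  stmt14_general i j k l i₁ j₁ k₁ l₁ hi hk hij hkl hij₁ hdisj heq
end

section
/- For every γ > 1 the following quantity is infinite: sup over all finite sets E ⊆ {(i,j) ∈ ℕ² : 1 ≤ i < j} and all reals (a_{ij})_{(i,j)∈E} with Σ_{(i,j)∈E} a_{ij}² ≤ 1 of sup_{1≤p<∞} p^{−1/γ}·‖Σ_{(i,j)∈E} a_{ij}·r_i·r_j·r_{i+j}‖_{L_p[0,1]}. Equivalently, for every M > 0 there exist such E, (a_{ij}) and p ∈ [1,∞) with p^{−1/γ}·‖Σ_{(i,j)∈E} a_{ij}·r_i·r_j·r_{i+j}‖_{L_p[0,1]} > M. (The unboundedness of the chaos over A = {(i,j,i+j) : i < j} in Exp L^γ for γ > 1, stated via the extrapolation description of the Exp L^γ norm.) -/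
open MeasureTheory

/-!
On the tiny interval `[0, 2^{-3m})` every Rademacher function `r_j` with `j ≤ 3m` equals `1`.
Hence the normalized chaos `m⁻¹ ∑_{i ≤ m < j ≤ 2m} r_i r_j r_{i+j}`, whose `m²` coefficients have
`ℓ₂`-norm `1`, takes the value `m` there. Its `L_m` norm is therefore at least
`m · (2^{-3m})^{1/m} = m / 8`, so `m^{-1/γ} ‖·‖_m ≥ m^{1 - 1/γ} / 8`, which is unbounded for `γ > 1`.
-/

open Finset Filter

lemma measurable_rademacher (j : ℕ) : Measurable (rademacher j) :=
  (measurable_from_top (f := fun k : ℤ => (-1 : ℝ) ^ k)).comp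
    (measurable_const.mul measurable_id).floor

lemma abs_rademacher (j : ℕ) (t : ℝ) : |rademacher j t| = 1 := by
  simp [rademacher]

lemma rademacher_eq_one_of_mem_Ico {j N : ℕ} (hj : j ≤ N) {t : ℝ}
    (ht : t ∈ Set.Ico 0 ((2 : ℝ) ^ N)⁻¹) : rademacher j t = 1 := by
  have hfloor : ⌊(2 : ℝ) ^ j * t⌋ = 0 := by
    refine Int.floor_eq_zero_iff.mpr ⟨by have := ht.1; positivity, ?_⟩
    calc (2 : ℝ) ^ j * t < 2 ^ j * (2 ^ N)⁻¹ := by gcongr; exact ht.2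
      _ ≤ 1 := by
        rw [← div_eq_mul_inv, div_le_one (by positivity)]
        exact pow_le_pow_right₀ one_le_two hj
  rw [rademacher, hfloor, zpow_zero]

/-- Chebyshev's inequality. Boundedness makes `|f| ^ p` integrable, without which `LpNorm` would be
the junk value `0`. -/
lemma mul_measureReal_rpow_le_LpNorm {p : ℝ} (hp : 0 < p) {f : ℝ → ℝ} (hf : Measurable f)
    {C : ℝ} (hC : ∀ t, |f t| ≤ C) {S : Set ℝ} (hS : MeasurableSet S)
    (hS01 : S ⊆ Set.Icc 0 1) {c : ℝ} (hc : 0 ≤ c) (hfS : ∀ t ∈ S, c ≤ |f t|) :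
    c * volume.real S ^ (1 / p) ≤ LpNorm p f := by
  have hint : IntegrableOn (fun t => |f t| ^ p) (Set.Icc 0 1) := by
    refine Measure.integrableOn_of_bounded (M := C ^ p) (by simp [Real.volume_Icc])
      ((hf.abs.pow_const p).aestronglyMeasurable) (Eventually.of_forall fun t => ?_)
    rw [Real.norm_of_nonneg (by positivity)]
    exact Real.rpow_le_rpow (abs_nonneg _) (hC t) hp.le
  have hlower : c ^ p * volume.real S ≤ ∫ t in Set.Icc 0 1, |f t| ^ p :=
    calc c ^ p * volume.real S = ∫ _ in S, c ^ p := by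
          rw [setIntegral_const, smul_eq_mul, mul_comm]
      _ ≤ ∫ t in S, |f t| ^ p :=
        setIntegral_mono_on (integrableOn_const (measure_mono hS01 |>.trans_lt
          (by simp [Real.volume_Icc])).ne) (hint.mono_set hS01) hS
          fun t ht => Real.rpow_le_rpow hc (hfS t ht) hp.le
      _ ≤ ∫ t in Set.Icc 0 1, |f t| ^ p :=
        setIntegral_mono_set hint (Eventually.of_forall fun t => by positivity)
          (Eventually.of_forall hS01)
  calc c * volume.real S ^ (1 / p) = (c ^ p * volume.real S) ^ (1 / p) := by
        rw [Real.mul_rpow (by positivity) measureReal_nonneg, ← Real.rpow_mul hc,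
          mul_one_div_cancel hp.ne', Real.rpow_one]
    _ ≤ LpNorm p f := Real.rpow_le_rpow (by positivity) hlower (by positivity)

noncomputable def sumChaos (E : Finset (ℕ × ℕ)) (a : ℕ × ℕ → ℝ) (t : ℝ) : ℝ :=
  ∑ q ∈ E, a q * (rademacher q.1 t * rademacher q.2 t * rademacher (q.1 + q.2) t)

lemma measurable_sumChaos (E : Finset (ℕ × ℕ)) (a : ℕ × ℕ → ℝ) :
    Measurable (sumChaos E a) :=
  Finset.measurable_sum _ fun _ _ => measurable_const.mul
    (((measurable_rademacher _).mul (measurable_rademacher _)).mul (measurable_rademacher _))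

lemma abs_sumChaos_le (E : Finset (ℕ × ℕ)) (a : ℕ × ℕ → ℝ) (t : ℝ) :
    |sumChaos E a t| ≤ ∑ q ∈ E, |a q| :=
  (abs_sum_le_sum_abs _ _).trans_eq <| sum_congr rfl fun q _ => by
    simp only [abs_mul, abs_rademacher, mul_one]

def block (m : ℕ) : Finset (ℕ × ℕ) := Icc 1 m ×ˢ Icc (m + 1) (2 * m)

lemma card_block (m : ℕ) : #(block m) = m * m := by
  simp only [block, card_product, Nat.card_Icc]
  congr 1; omega

lemma one_le_fst_lt_snd_of_mem_block {m : ℕ} {q : ℕ × ℕ} (hq : q ∈ block m) :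
    1 ≤ q.1 ∧ q.1 < q.2 := by
  simp only [block, mem_product, mem_Icc] at hq
  omega

lemma sum_inv_sq_block_le_one (m : ℕ) : ∑ _ ∈ block m, ((m : ℝ)⁻¹) ^ 2 ≤ 1 := by
  rw [sum_const, card_block, nsmul_eq_mul]
  push_cast
  rcases eq_or_ne m 0 with rfl | hm
  · simp
  · field_simp; rfl

lemma sum_block_const_inv (m : ℕ) : ∑ _ ∈ block m, (m : ℝ)⁻¹ = m := by
  rw [sum_const, card_block, nsmul_eq_mul]
  push_cast
  rcases eq_or_ne m 0 with rfl | hm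
  · simp
  · field_simp

lemma abs_sumChaos_block_le (m : ℕ) (t : ℝ) :
    |sumChaos (block m) (fun _ => (m : ℝ)⁻¹) t| ≤ m := by
  refine (abs_sumChaos_le _ _ t).trans_eq ?_
  simp only [abs_inv, Nat.abs_cast, sum_block_const_inv]

lemma sumChaos_block_eq {m : ℕ} {t : ℝ} (ht : t ∈ Set.Ico 0 ((2 : ℝ) ^ (3 * m))⁻¹) :
    sumChaos (block m) (fun _ => (m : ℝ)⁻¹) t = m := by
  have hr : ∀ j ≤ 3 * m, rademacher j t = 1 := fun j hj => rademacher_eq_one_of_mem_Ico hj ht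
  refine (sum_congr rfl fun q hq => ?_).trans (sum_block_const_inv m)
  simp only [block, mem_product, mem_Icc] at hq
  rw [hr q.1 (by omega), hr q.2 (by omega), hr (q.1 + q.2) (by omega), mul_one, mul_one, mul_one]

lemma div_eight_le_LpNorm_sumChaos_block {m : ℕ} (hm : 0 < m) :
    (m : ℝ) / 8 ≤ LpNorm m (sumChaos (block m) fun _ => (m : ℝ)⁻¹) := by
  have hm' : (0 : ℝ) < m := Nat.cast_pos.mpr hm
  have hε : (0 : ℝ) ≤ ((2 : ℝ) ^ (3 * m))⁻¹ := by positivity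
  have hsub : Set.Ico 0 ((2 : ℝ) ^ (3 * m))⁻¹ ⊆ Set.Icc 0 1 :=
    Set.Ico_subset_Icc_self.trans
      (Set.Icc_subset_Icc_right (inv_le_one_of_one_le₀ (one_le_pow₀ one_le_two)))
  have hbound := mul_measureReal_rpow_le_LpNorm hm' (measurable_sumChaos _ _)
    (abs_sumChaos_block_le m) measurableSet_Ico hsub hm'.le
    (fun t ht => by rw [sumChaos_block_eq ht, Nat.abs_cast])
  have hvol : volume.real (Set.Ico 0 ((2 : ℝ) ^ (3 * m))⁻¹) ^ (1 / (m : ℝ)) = 8⁻¹ := by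
    rw [Real.volume_real_Ico_of_le hε, sub_zero, Real.inv_rpow (by positivity),
      ← Real.rpow_natCast, ← Real.rpow_mul zero_le_two, Nat.cast_mul, mul_assoc,
      mul_one_div_cancel hm'.ne']
    norm_num
  rwa [hvol, ← div_eq_mul_inv] at hbound

lemma tendsto_rpow_neg_inv_mul_div_eight {γ : ℝ} (hγ : 1 < γ) :
    Tendsto (fun m : ℕ => (m : ℝ) ^ (-(1 : ℝ) / γ) * ((m : ℝ) / 8)) atTop atTop := by
  have hα : 0 < 1 - 1 / γ := sub_pos.mpr ((div_lt_one (by linarith)).mpr hγ)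
  refine (((tendsto_rpow_atTop hα).comp tendsto_natCast_atTop_atTop).atTop_div_const
    (by norm_num : (0 : ℝ) < 8)).congr' ?_
  filter_upwards [eventually_gt_atTop 0] with m hm
  have hm' : (0 : ℝ) < m := Nat.cast_pos.mpr hm
  simp only [Function.comp_apply]
  rw [mul_div_assoc', ← Real.rpow_add_one hm'.ne']
  ring_nf

theorem stmt17_general (γ : ℝ) (hγ : 1 < γ) (M : ℝ) :
    ∃ E : Finset (ℕ × ℕ), (∀ q ∈ E, 1 ≤ q.1 ∧ q.1 < q.2) ∧
      ∃ a : ℕ × ℕ → ℝ, (∑ q ∈ E, (a q) ^ 2) ≤ 1 ∧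
        ∃ p : ℝ, 1 ≤ p ∧
          M < p ^ (-(1 : ℝ) / γ) * LpNorm p (fun t => ∑ q ∈ E,
            a q * (rademacher q.1 t * rademacher q.2 t * rademacher (q.1 + q.2) t)) := by
  obtain ⟨m, hm, hM⟩ := ((eventually_ge_atTop 1).and
    ((tendsto_rpow_neg_inv_mul_div_eight hγ).eventually_gt_atTop M)).exists
  refine ⟨block m, fun _ => one_le_fst_lt_snd_of_mem_block, fun _ => (m : ℝ)⁻¹,
    sum_inv_sq_block_le_one m, m, Nat.one_le_cast.mpr hm, hM.trans_le ?_⟩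
  gcongr
  exact div_eight_le_LpNorm_sumChaos_block hm

/-- for every `γ > 1` the chaos over `A = {(i,j,i+j) : i < j}` is
unbounded in the extrapolation norm `sup_{p≥1} p^{-1/γ} ‖·‖_p` of `Exp L^γ`,
uniformly over `ℓ₂`-normalized coefficients. -/
theorem stmt17 (γ : ℝ) (hγ : 1 < γ) (M : ℝ) (hM : 0 < M) :
    ∃ E : Finset (ℕ × ℕ), (∀ q ∈ E, 1 ≤ q.1 ∧ q.1 < q.2) ∧
      ∃ a : ℕ × ℕ → ℝ, (∑ q ∈ E, (a q) ^ 2) ≤ 1 ∧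
        ∃ p : ℝ, 1 ≤ p ∧
          M < p ^ (-(1 : ℝ) / γ) * LpNorm p (fun t => ∑ q ∈ E,
            a q * (rademacher q.1 t * rademacher q.2 t * rademacher (q.1 + q.2) t)) :=
  stmt17_general γ hγ M
end
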